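/- Let g be a probability density on ℝ with continuous cdf G, let λ ≠ 0, and let f(x) = (λ/(1 − e^{−λ})) g(x) e^{−λG(x)}. Let z be any probability density on ℝ, absolutely continuous with respect to f (i.e., z = 0 a.e. where f = 0), such that z log z and z log f are integrable and z satisfies the two constraints ∫ z(x) log g(x) dx = ∫ f(x) log g(x) dx and ∫ z(x) G(x) dx = 1/λ − 1/(e^λ − 1). Then −∫ z log z dx ≤ −∫ f log f dx, with equality if and only if z = f Lebesgue-almost everywhere. That is, f is the unique maximum Shannon entropy density under constraints C1 and C2. -/

import Mathlib

open Real Set MeasureTheory ProbabilityTheory Filter Topology InformationTheory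

/-!
Write `f = (h ∘ G) * g`, where `h u = c e^{-λu}` with `c = λ / (1 - e^{-λ})` is the truncated
exponential density on `[0, 1]`. Since `log f = log c - λ G + log g` wherever `f ≠ 0`, the
constraints C1 and C2 pin down the cross entropy `∫ z log f`, and it equals `∫ f log f`: both
are `∫₀¹ h log h + ∫ f log g`. For `f` this is the probability integral transform: a continuous
cdf `G` pushes `g dx` forward to the uniform distribution on `[0, 1]`, so `∫ φ(G) g = ∫₀¹ φ`.
Gibbs' inequality `∫ z log f ≤ ∫ z log z`, with equality only for `z = f` a.e., then gives both
the bound and the equality case.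
-/

lemma sub_sub_mul_log_sub_eq_mul_klFun {a b : ℝ} (hb : 0 < b) :
    b - a - (a * log b - a * log a) = b * klFun (a / b) := by
  rcases eq_or_ne a 0 with rfl | ha
  · simp [klFun]
  · rw [klFun, log_div ha hb.ne']
    field_simp
    ring

lemma mul_log_sub_mul_log_le_sub {a b : ℝ} (ha : 0 ≤ a) (hb : 0 ≤ b) (hab : b = 0 → a = 0) :
    a * log b - a * log a ≤ b - a := by
  rcases hb.eq_or_lt with rfl | hb
  · simp [hab rfl]
  · have := mul_nonneg hb.le (klFun_nonneg (div_nonneg ha hb.le))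
    linarith [sub_sub_mul_log_sub_eq_mul_klFun (a := a) hb]

lemma eq_of_mul_log_sub_mul_log_eq_sub {a b : ℝ} (ha : 0 ≤ a) (hb : 0 ≤ b)
    (hab : b = 0 → a = 0) (h : a * log b - a * log a = b - a) : a = b := by
  rcases hb.eq_or_lt with rfl | hb
  · exact hab rfl
  · have hkl : b * klFun (a / b) = 0 := by
      linarith [sub_sub_mul_log_sub_eq_mul_klFun (a := a) hb]
    have := (klFun_eq_zero_iff (div_nonneg ha hb.le)).1
      ((mul_eq_zero.1 hkl).resolve_left hb.ne')
    rwa [div_eq_one_iff_eq hb.ne'] at this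

section Gibbs

variable {α : Type*} [MeasurableSpace α] {μ : Measure α} {f z : α → ℝ}

lemma integral_sub_sub_mul_log_sub (hfi : Integrable f μ) (hzi : Integrable z μ)
    (hmass : ∫ x, f x ∂μ = ∫ x, z x ∂μ)
    (hzz : Integrable (fun x => z x * log (z x)) μ)
    (hzf : Integrable (fun x => z x * log (f x)) μ) :
    ∫ x, (f x - z x - (z x * log (f x) - z x * log (z x))) ∂μ =
      ∫ x, z x * log (z x) ∂μ - ∫ x, z x * log (f x) ∂μ := by
  rw [integral_sub (f := fun x => f x - z x) (g := fun x => z x * log (f x) - z x * log (z x))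
    (hfi.sub hzi) (hzf.sub hzz), integral_sub hfi hzi, integral_sub hzf hzz, hmass]
  ring

lemma ae_nonneg_sub_sub_mul_log_sub (hf0 : 0 ≤ᵐ[μ] f) (hz0 : 0 ≤ᵐ[μ] z)
    (hzac : ∀ᵐ x ∂μ, f x = 0 → z x = 0) :
    0 ≤ᵐ[μ] fun x => f x - z x - (z x * log (f x) - z x * log (z x)) := by
  filter_upwards [hf0, hz0, hzac] with x hfx hzx hx
  rw [Pi.zero_apply] at hfx hzx ⊢
  linarith [mul_log_sub_mul_log_le_sub hzx hfx hx]

theorem integral_mul_log_le_integral_mul_log (hf0 : 0 ≤ᵐ[μ] f) (hz0 : 0 ≤ᵐ[μ] z)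
    (hfi : Integrable f μ) (hzi : Integrable z μ) (hmass : ∫ x, f x ∂μ = ∫ x, z x ∂μ)
    (hzac : ∀ᵐ x ∂μ, f x = 0 → z x = 0)
    (hzz : Integrable (fun x => z x * log (z x)) μ)
    (hzf : Integrable (fun x => z x * log (f x)) μ) :
    ∫ x, z x * log (f x) ∂μ ≤ ∫ x, z x * log (z x) ∂μ := by
  linarith [integral_nonneg_of_ae (ae_nonneg_sub_sub_mul_log_sub hf0 hz0 hzac),
    integral_sub_sub_mul_log_sub hfi hzi hmass hzz hzf]

theorem ae_eq_of_integral_mul_log_eq (hf0 : 0 ≤ᵐ[μ] f) (hz0 : 0 ≤ᵐ[μ] z)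
    (hfi : Integrable f μ) (hzi : Integrable z μ) (hmass : ∫ x, f x ∂μ = ∫ x, z x ∂μ)
    (hzac : ∀ᵐ x ∂μ, f x = 0 → z x = 0)
    (hzz : Integrable (fun x => z x * log (z x)) μ)
    (hzf : Integrable (fun x => z x * log (f x)) μ)
    (heq : ∫ x, z x * log (f x) ∂μ = ∫ x, z x * log (z x) ∂μ) : z =ᵐ[μ] f := by
  have hgap_zero := (integral_eq_zero_iff_of_nonneg_ae
      (ae_nonneg_sub_sub_mul_log_sub hf0 hz0 hzac) ((hfi.sub hzi).sub (hzf.sub hzz))).1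
    (by linarith [integral_sub_sub_mul_log_sub hfi hzi hmass hzz hzf])
  filter_upwards [hf0, hz0, hzac, hgap_zero] with x hfx hzx hx hgx
  exact eq_of_mul_log_sub_mul_log_eq_sub hzx hfx hx (by simp only [Pi.zero_apply] at hgx; linarith)

noncomputable def shannonEntropy (μ : Measure α) (h : α → ℝ) : ℝ :=
  -∫ x, h x * log (h x) ∂μ

theorem shannonEntropy_le_and_eq_iff_of_integral_mul_log_le (hf0 : 0 ≤ᵐ[μ] f)
    (hz0 : 0 ≤ᵐ[μ] z) (hfi : Integrable f μ) (hzi : Integrable z μ)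
    (hmass : ∫ x, f x ∂μ = ∫ x, z x ∂μ) (hzac : ∀ᵐ x ∂μ, f x = 0 → z x = 0)
    (hzz : Integrable (fun x => z x * log (z x)) μ)
    (hzf : Integrable (fun x => z x * log (f x)) μ)
    (hcross : ∫ x, f x * log (f x) ∂μ ≤ ∫ x, z x * log (f x) ∂μ) :
    shannonEntropy μ z ≤ shannonEntropy μ f ∧
      (shannonEntropy μ z = shannonEntropy μ f ↔ z =ᵐ[μ] f) := by
  have hgibbs := integral_mul_log_le_integral_mul_log hf0 hz0 hfi hzi hmass hzac hzz hzf
  refine ⟨neg_le_neg (hcross.trans hgibbs), fun heq => ?_, fun hae => ?_⟩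
  · refine ae_eq_of_integral_mul_log_eq hf0 hz0 hfi hzi hmass hzac hzz hzf (le_antisymm hgibbs ?_)
    rw [shannonEntropy, shannonEntropy, neg_inj] at heq
    exact heq ▸ hcross
  · rw [shannonEntropy, shannonEntropy, integral_congr_ae (hae.mono fun x hx => by rw [hx])]

end Gibbs

lemma preimage_Iic_eq_Iic_of_continuous_monotone {F : ℝ → ℝ} (hFc : Continuous F)
    (hFm : Monotone F) {u : ℝ} (hne : (F ⁻¹' Iic u).Nonempty)
    (hbdd : BddAbove (F ⁻¹' Iic u)) :
    ∃ t, F ⁻¹' Iic u = Iic t ∧ F t = u := by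
  set S := F ⁻¹' Iic u
  have hclosed : IsClosed S := isClosed_Iic.preimage hFc
  have htS : sSup S ∈ S := hclosed.csSup_mem hne hbdd
  refine ⟨sSup S, subset_antisymm (fun x hx => le_csSup hbdd hx)
    (fun x hx => le_trans (hFm hx) htS), le_antisymm htS ?_⟩
  refine ge_of_tendsto ((hFc.tendsto _).mono_left (nhdsWithin_le_nhds (s := Ioi (sSup S)))) ?_
  filter_upwards [self_mem_nhdsWithin] with x (hx : sSup S < x)
  by_contra! hxu
  exact hx.not_ge (le_csSup hbdd hxu.le)

section ProbabilityIntegralTransform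

variable {μ : Measure ℝ} [IsProbabilityMeasure μ]

lemma measure_cdf_preimage_Iic (hcont : Continuous (cdf μ)) {u : ℝ} (hu : u ≤ 1) :
    μ (cdf μ ⁻¹' Iic u) = ENNReal.ofReal u := by
  rcases hu.eq_or_lt with rfl | hu
  · rw [eq_univ_of_forall (s := cdf μ ⁻¹' Iic 1) (cdf_le_one μ), measure_univ,
      ENNReal.ofReal_one]
  rcases (cdf μ ⁻¹' Iic u).eq_empty_or_nonempty with hempty | hne
  · have hu0 : u ≤ 0 := by
      refine ge_of_tendsto' (tendsto_cdf_atBot μ) fun x => ?_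
      by_contra! hx
      exact hempty.subset (show cdf μ x ≤ u from hx.le)
    rw [hempty, measure_empty, ENNReal.ofReal_of_nonpos hu0]
  · have hbdd : BddAbove (cdf μ ⁻¹' Iic u) := by
      obtain ⟨x₀, hx₀⟩ := ((tendsto_cdf_atTop μ).eventually (eventually_gt_nhds hu)).exists
      exact ⟨x₀, fun x hx =>
        not_lt.1 fun hlt => (hx₀.trans_le (monotone_cdf μ hlt.le)).not_ge hx⟩
    obtain ⟨t, hS, ht⟩ :=
      preimage_Iic_eq_Iic_of_continuous_monotone hcont (monotone_cdf μ) hne hbdd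
    rw [hS, ← ofReal_cdf, ht]

theorem map_cdf_eq_restrict_Icc (hcont : Continuous (cdf μ)) :
    μ.map (cdf μ) = volume.restrict (Icc 0 1) := by
  have hmeas : Measurable (cdf μ) := (monotone_cdf μ).measurable
  refine Measure.ext_of_Iic _ _ fun u => ?_
  have hpre : cdf μ ⁻¹' Iic u = cdf μ ⁻¹' Iic (min 1 u) := by
    ext x
    simp only [mem_preimage, mem_Iic, le_min_iff, cdf_le_one, true_and]
  have hinter : Iic u ∩ Icc 0 1 = Icc 0 (min 1 u) := by
    ext x
    simp only [mem_inter_iff, mem_Iic, mem_Icc, le_min_iff]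
    tauto
  rw [Measure.map_apply hmeas measurableSet_Iic, Measure.restrict_apply measurableSet_Iic, hpre,
    measure_cdf_preimage_Iic hcont (min_le_left _ _), hinter, volume_Icc, sub_zero]

end ProbabilityIntegralTransform

section Density

variable {g G : ℝ → ℝ}

lemma continuous_integral_Iio (hgint : Integrable g) : Continuous fun x => ∫ t in Iio x, g t :=
  continuous_iff_continuousAt.2 fun x =>
    (hgint.integrableOn.continuousOn_Iic_primitive_Iio (a₀ := x + 1)).continuousAt
      (Iic_mem_nhds (lt_add_one x))

lemma withDensity_ofReal_apply (hg0 : 0 ≤ᵐ[volume] g) (hgint : Integrable g) {s : Set ℝ}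
    (hs : MeasurableSet s) :
    volume.withDensity (fun x => ENNReal.ofReal (g x)) s = ENNReal.ofReal (∫ x in s, g x) := by
  rw [withDensity_apply _ hs,
    ofReal_integral_eq_lintegral_ofReal hgint.integrableOn (ae_restrict_of_ae hg0)]

lemma isProbabilityMeasure_withDensity_ofReal (hg0 : 0 ≤ᵐ[volume] g) (hgint : Integrable g)
    (hg1 : ∫ x, g x = 1) :
    IsProbabilityMeasure (volume.withDensity fun x => ENNReal.ofReal (g x)) :=
  ⟨by rw [withDensity_ofReal_apply hg0 hgint MeasurableSet.univ, Measure.restrict_univ, hg1,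
    ENNReal.ofReal_one]⟩

lemma cdf_withDensity_ofReal (hg0 : 0 ≤ᵐ[volume] g) (hgint : Integrable g) (hg1 : ∫ x, g x = 1)
    (x : ℝ) : cdf (volume.withDensity fun x => ENNReal.ofReal (g x)) x = ∫ t in Iio x, g t := by
  have := isProbabilityMeasure_withDensity_ofReal hg0 hgint hg1
  rw [← ENNReal.ofReal_eq_ofReal_iff (cdf_nonneg _ x)
    (setIntegral_nonneg_of_ae_restrict (ae_restrict_of_ae hg0)), ofReal_cdf,
    withDensity_ofReal_apply hg0 hgint measurableSet_Iic, integral_Iic_eq_integral_Iio]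

lemma eq_cdf_withDensity_ofReal (hg0 : 0 ≤ᵐ[volume] g) (hgint : Integrable g)
    (hg1 : ∫ x, g x = 1) (hG : ∀ x, G x = ∫ t in Iio x, g t) :
    G = cdf (volume.withDensity fun x => ENNReal.ofReal (g x)) :=
  funext fun x => by rw [hG, cdf_withDensity_ofReal hg0 hgint hg1]

theorem map_withDensity_ofReal_eq_restrict_Icc (hg0 : 0 ≤ᵐ[volume] g) (hgint : Integrable g)
    (hg1 : ∫ x, g x = 1) (hG : ∀ x, G x = ∫ t in Iio x, g t) :
    (volume.withDensity fun x => ENNReal.ofReal (g x)).map G = volume.restrict (Icc 0 1) := by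
  have := isProbabilityMeasure_withDensity_ofReal hg0 hgint hg1
  have hGcdf := eq_cdf_withDensity_ofReal hg0 hgint hg1 hG
  have hcont : Continuous G := funext hG ▸ continuous_integral_Iio hgint
  rw [hGcdf] at hcont ⊢
  exact map_cdf_eq_restrict_Icc hcont

lemma measurable_of_forall_eq_integral_Iio (hgint : Integrable g)
    (hG : ∀ x, G x = ∫ t in Iio x, g t) : Measurable G :=
  (funext hG ▸ continuous_integral_Iio hgint).measurable

lemma mem_Icc_of_forall_eq_integral_Iio (hg0 : 0 ≤ᵐ[volume] g) (hgint : Integrable g)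
    (hg1 : ∫ x, g x = 1) (hG : ∀ x, G x = ∫ t in Iio x, g t) (x : ℝ) : G x ∈ Icc 0 1 := by
  rw [eq_cdf_withDensity_ofReal hg0 hgint hg1 hG]
  exact ⟨cdf_nonneg _ x, cdf_le_one _ x⟩

lemma integrable_withDensity_ofReal_iff (hg0 : 0 ≤ᵐ[volume] g) (hgint : Integrable g)
    {ψ : ℝ → ℝ} :
    Integrable ψ (volume.withDensity fun x => ENNReal.ofReal (g x)) ↔
      Integrable (fun x => ψ x * g x) := by
  rw [integrable_withDensity_iff_integrable_smul₀' hgint.aemeasurable.ennreal_ofReal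
    (ae_of_all _ fun _ => ENNReal.ofReal_lt_top)]
  refine integrable_congr ?_
  filter_upwards [hg0] with x hx
  rw [ENNReal.toReal_ofReal hx, smul_eq_mul, mul_comm]

lemma integral_withDensity_ofReal (hg0 : 0 ≤ᵐ[volume] g) (hgint : Integrable g)
    (ψ : ℝ → ℝ) :
    ∫ x, ψ x ∂(volume.withDensity fun x => ENNReal.ofReal (g x)) = ∫ x, ψ x * g x := by
  rw [integral_withDensity_eq_integral_toReal_smul₀ hgint.aemeasurable.ennreal_ofReal
    (ae_of_all _ fun _ => ENNReal.ofReal_lt_top)]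
  refine integral_congr_ae ?_
  filter_upwards [hg0] with x hx
  rw [ENNReal.toReal_ofReal hx, smul_eq_mul, mul_comm]

theorem integrable_comp_mul_of_integrableOn_Icc (hg0 : 0 ≤ᵐ[volume] g) (hgint : Integrable g)
    (hg1 : ∫ x, g x = 1) (hG : ∀ x, G x = ∫ t in Iio x, g t) {φ : ℝ → ℝ}
    (hφ : IntegrableOn φ (Icc 0 1)) : Integrable fun x => φ (G x) * g x := by
  rw [IntegrableOn, ← map_withDensity_ofReal_eq_restrict_Icc hg0 hgint hg1 hG] at hφ
  exact (integrable_withDensity_ofReal_iff hg0 hgint).1 <|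
    (integrable_map_measure hφ.aestronglyMeasurable
      (measurable_of_forall_eq_integral_Iio hgint hG).aemeasurable).1 hφ

theorem integral_comp_mul_eq_integral_Icc (hg0 : 0 ≤ᵐ[volume] g) (hgint : Integrable g)
    (hg1 : ∫ x, g x = 1) (hG : ∀ x, G x = ∫ t in Iio x, g t) {φ : ℝ → ℝ}
    (hφ : IntegrableOn φ (Icc 0 1)) : ∫ x, φ (G x) * g x = ∫ u in Icc 0 1, φ u := by
  rw [IntegrableOn, ← map_withDensity_ofReal_eq_restrict_Icc hg0 hgint hg1 hG] at hφ
  rw [← integral_withDensity_ofReal hg0 hgint,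
    ← map_withDensity_ofReal_eq_restrict_Icc hg0 hgint hg1 hG,
    integral_map (measurable_of_forall_eq_integral_Iio hgint hG).aemeasurable
      hφ.aestronglyMeasurable]

end Density

lemma one_sub_exp_neg_ne_zero {l : ℝ} (hl : l ≠ 0) : 1 - exp (-l) ≠ 0 := by
  rw [sub_ne_zero, Ne, eq_comm, exp_eq_one_iff, neg_eq_zero]
  exact hl

lemma div_one_sub_exp_neg_pos {l : ℝ} (hl : l ≠ 0) : 0 < l / (1 - exp (-l)) := by
  rcases hl.lt_or_gt with hl | hl
  · exact div_pos_of_neg_of_neg hl (sub_neg.2 (one_lt_exp_iff.2 (neg_pos.2 hl)))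
  · exact div_pos hl (sub_pos.2 (exp_lt_one_iff.2 (neg_neg_iff_pos.2 hl)))

noncomputable def truncExpDensity (l u : ℝ) : ℝ := l / (1 - exp (-l)) * exp (-(l * u))

section TruncExp

variable {l : ℝ}

lemma truncExpDensity_pos (hl : l ≠ 0) (u : ℝ) : 0 < truncExpDensity l u :=
  mul_pos (div_one_sub_exp_neg_pos hl) (exp_pos _)

lemma continuous_truncExpDensity : Continuous (truncExpDensity l) := by
  unfold truncExpDensity
  fun_prop

lemma log_truncExpDensity (hl : l ≠ 0) (u : ℝ) :
    log (truncExpDensity l u) = log (l / (1 - exp (-l))) - l * u := by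
  rw [truncExpDensity, log_mul (div_one_sub_exp_neg_pos hl).ne' (exp_pos _).ne', log_exp]
  ring

lemma hasDerivAt_exp_neg_mul (l u : ℝ) :
    HasDerivAt (fun u => exp (-(l * u))) (-l * exp (-(l * u))) u := by
  simpa [mul_comm] using ((hasDerivAt_id' u).const_mul (-l)).exp

lemma integral_Icc_exp_neg_mul (hl : l ≠ 0) :
    ∫ u in Icc 0 1, exp (-(l * u)) = (1 - exp (-l)) / l := by
  have hderiv : ∀ u ∈ uIcc (0 : ℝ) 1,
      HasDerivAt (fun u => exp (-(l * u)) / -l) (exp (-(l * u))) u := fun u _ =>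
    ((hasDerivAt_exp_neg_mul l u).div_const (-l)).congr_deriv (by field_simp)
  rw [integral_Icc_eq_integral_Ioc, ← intervalIntegral.integral_of_le zero_le_one,
    intervalIntegral.integral_eq_sub_of_hasDerivAt hderiv
      (Continuous.intervalIntegrable (by fun_prop) _ _)]
  simp only [mul_one, mul_zero, neg_zero, exp_zero]
  field_simp
  ring

lemma integral_Icc_mul_exp_neg_mul (hl : l ≠ 0) :
    ∫ u in Icc 0 1, u * exp (-(l * u)) = ((1 - exp (-l)) / l - exp (-l)) / l := by
  have hderiv : ∀ u ∈ uIcc (0 : ℝ) 1,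
      HasDerivAt (fun u => -(u / l + 1 / l ^ 2) * exp (-(l * u))) (u * exp (-(l * u))) u :=
    fun u _ =>
    ((((hasDerivAt_id' u).div_const l).add_const (1 / l ^ 2)).fun_neg.fun_mul
      (hasDerivAt_exp_neg_mul l u)).congr_deriv (by field_simp; ring)
  rw [integral_Icc_eq_integral_Ioc, ← intervalIntegral.integral_of_le zero_le_one,
    intervalIntegral.integral_eq_sub_of_hasDerivAt hderiv
      (Continuous.intervalIntegrable (by fun_prop) _ _)]
  simp only [mul_one, mul_zero, neg_zero, exp_zero, zero_div, zero_add]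
  field_simp
  ring

lemma integral_truncExpDensity (hl : l ≠ 0) : ∫ u in Icc 0 1, truncExpDensity l u = 1 := by
  simp only [truncExpDensity]
  rw [integral_const_mul, integral_Icc_exp_neg_mul hl]
  field_simp [one_sub_exp_neg_ne_zero hl]

lemma integral_mul_truncExpDensity (hl : l ≠ 0) :
    ∫ u in Icc 0 1, u * truncExpDensity l u = 1 / l - 1 / (exp l - 1) := by
  have hne := one_sub_exp_neg_ne_zero hl
  have hne' : exp l - 1 ≠ 0 := by
    rw [sub_ne_zero, Ne, exp_eq_one_iff]
    exact hl
  simp only [truncExpDensity, mul_left_comm _ (l / _)]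
  rw [integral_const_mul, integral_Icc_mul_exp_neg_mul hl]
  rw [exp_neg] at hne ⊢
  field_simp

lemma integral_truncExpDensity_mul_log (hl : l ≠ 0) :
    ∫ u in Icc 0 1, truncExpDensity l u * log (truncExpDensity l u) =
      log (l / (1 - exp (-l))) - l * (1 / l - 1 / (exp l - 1)) := by
  have hcont := continuous_truncExpDensity (l := l)
  have hsplit : ∀ u, truncExpDensity l u * log (truncExpDensity l u) =
      log (l / (1 - exp (-l))) * truncExpDensity l u - l * (u * truncExpDensity l u) := fun u => by
    rw [log_truncExpDensity hl]
    ring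
  simp_rw [hsplit]
  have hint : IntegrableOn (fun u => u * truncExpDensity l u) (Icc 0 1) :=
    (continuous_id.mul hcont).integrableOn_Icc
  rw [integral_sub (hcont.integrableOn_Icc.const_mul _) (hint.const_mul l),
    integral_const_mul, integral_const_mul, integral_truncExpDensity hl,
    integral_mul_truncExpDensity hl, mul_one]

lemma integral_truncExpDensity_mul_log_nonneg (hl : l ≠ 0) :
    0 ≤ ∫ u in Icc 0 1, truncExpDensity l u * log (truncExpDensity l u) := by
  have hcont := continuous_truncExpDensity (l := l)
  have hmass : ∫ _ in Icc (0 : ℝ) 1, (1 : ℝ) = ∫ u in Icc 0 1, truncExpDensity l u := by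
    rw [integral_truncExpDensity hl, setIntegral_const, smul_eq_mul, mul_one, measureReal_def,
      volume_Icc, sub_zero, ENNReal.toReal_ofReal zero_le_one]
  simpa using integral_mul_log_le_integral_mul_log (μ := volume.restrict (Icc 0 1))
    (f := fun _ => 1) (z := truncExpDensity l) (ae_of_all _ fun _ => zero_le_one)
    (ae_of_all _ fun u => (truncExpDensity_pos hl u).le) (integrable_const 1)
    hcont.integrableOn_Icc hmass (ae_of_all _ fun _ h => absurd h one_ne_zero)
    (continuous_mul_log.comp hcont).integrableOn_Icc (by simp)

end TruncExp

lemma mul_log_mul_of_imp {w a b : ℝ} (ha : a ≠ 0) (hw : b = 0 → w = 0) :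
    w * log (a * b) = w * log a + w * log b := by
  rcases eq_or_ne b 0 with hb | hb
  · simp [hb, hw hb]
  · rw [log_mul ha hb, mul_add]

section ExpG

variable {g G f : ℝ → ℝ} {l : ℝ}

lemma integrable_expG (hg0 : ∀ x, 0 ≤ g x) (hgint : Integrable g) (hg1 : ∫ x, g x = 1)
    (hG : ∀ x, G x = ∫ t in Iio x, g t) : Integrable fun x => truncExpDensity l (G x) * g x :=
  integrable_comp_mul_of_integrableOn_Icc (ae_of_all _ hg0) hgint hg1 hG
    continuous_truncExpDensity.integrableOn_Icc

lemma integral_expG (hg0 : ∀ x, 0 ≤ g x) (hgint : Integrable g) (hg1 : ∫ x, g x = 1)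
    (hG : ∀ x, G x = ∫ t in Iio x, g t) (hl : l ≠ 0) :
    ∫ x, truncExpDensity l (G x) * g x = 1 := by
  rw [integral_comp_mul_eq_integral_Icc (ae_of_all _ hg0) hgint hg1 hG
    continuous_truncExpDensity.integrableOn_Icc, integral_truncExpDensity hl]

lemma mul_log_expG_ae_eq (hl : l ≠ 0) (hf : ∀ x, f x = truncExpDensity l (G x) * g x)
    {w : ℝ → ℝ} (hw : ∀ᵐ x, g x = 0 → w x = 0) :
    (fun x => w x * log (f x)) =ᵐ[volume]
      fun x => w x * log (truncExpDensity l (G x)) + w x * log (g x) := by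
  filter_upwards [hw] with x hx
  rw [hf, mul_log_mul_of_imp (truncExpDensity_pos hl _).ne' hx]

lemma integral_mul_log_truncExpDensity_comp {z : ℝ → ℝ} (hg0 : ∀ x, 0 ≤ g x)
    (hgint : Integrable g) (hg1 : ∫ x, g x = 1) (hG : ∀ x, G x = ∫ t in Iio x, g t)
    (hl : l ≠ 0) (hzint : Integrable z) (hz1 : ∫ x, z x = 1)
    (hC2 : ∫ x, z x * G x = 1 / l - 1 / (exp l - 1)) :
    Integrable (fun x => z x * log (truncExpDensity l (G x))) ∧
      ∫ x, z x * log (truncExpDensity l (G x)) =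
        ∫ u in Icc 0 1, truncExpDensity l u * log (truncExpDensity l u) := by
  have hG01 := mem_Icc_of_forall_eq_integral_Iio (ae_of_all _ hg0) hgint hg1 hG
  have hzG : Integrable fun x => z x * G x :=
    hzint.mul_bdd (measurable_of_forall_eq_integral_Iio hgint hG).aestronglyMeasurable
      (ae_of_all _ fun x => abs_le.2 ⟨by linarith [(hG01 x).1], (hG01 x).2⟩)
  have hsplit : (fun x => z x * log (truncExpDensity l (G x))) =
      fun x => log (l / (1 - exp (-l))) * z x - l * (z x * G x) := funext fun x => by
    rw [log_truncExpDensity hl]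
    ring
  rw [hsplit, integral_sub (hzint.const_mul _) (hzG.const_mul l), integral_const_mul,
    integral_const_mul, hz1, hC2, integral_truncExpDensity_mul_log hl, mul_one]
  exact ⟨(hzint.const_mul _).sub (hzG.const_mul l), rfl⟩

lemma integral_expG_mul_log_truncExpDensity_comp (hg0 : ∀ x, 0 ≤ g x) (hgint : Integrable g)
    (hg1 : ∫ x, g x = 1) (hG : ∀ x, G x = ∫ t in Iio x, g t)
    (hf : ∀ x, f x = truncExpDensity l (G x) * g x) :
    Integrable (fun x => f x * log (truncExpDensity l (G x))) ∧
      ∫ x, f x * log (truncExpDensity l (G x)) =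
        ∫ u in Icc 0 1, truncExpDensity l u * log (truncExpDensity l u) := by
  have hφ : IntegrableOn (fun u => truncExpDensity l u * log (truncExpDensity l u)) (Icc 0 1) :=
    (continuous_mul_log.comp continuous_truncExpDensity).integrableOn_Icc
  have hcomp : (fun x => f x * log (truncExpDensity l (G x))) =
      fun x => truncExpDensity l (G x) * log (truncExpDensity l (G x)) * g x :=
    funext fun x => by rw [hf]; ring
  rw [hcomp]
  exact ⟨integrable_comp_mul_of_integrableOn_Icc (ae_of_all _ hg0) hgint hg1 hG hφ,
    integral_comp_mul_eq_integral_Icc (ae_of_all _ hg0) hgint hg1 hG hφ⟩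

/-- When `f log g` is not integrable, `∫ f log f` takes the junk value `0`, and the bound holds
because the truncated exponential has nonpositive entropy. -/
theorem integral_expG_mul_log_le {z : ℝ → ℝ} (hg0 : ∀ x, 0 ≤ g x) (hgint : Integrable g)
    (hg1 : ∫ x, g x = 1) (hG : ∀ x, G x = ∫ t in Iio x, g t) (hl : l ≠ 0)
    (hf : ∀ x, f x = truncExpDensity l (G x) * g x) (hzint : Integrable z) (hz1 : ∫ x, z x = 1)
    (hzac : ∀ᵐ x, f x = 0 → z x = 0) (hzlogf : Integrable fun x => z x * log (f x))
    (hC1 : ∫ x, z x * log (g x) = ∫ x, f x * log (g x))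
    (hC2 : ∫ x, z x * G x = 1 / l - 1 / (exp l - 1)) :
    ∫ x, f x * log (f x) ≤ ∫ x, z x * log (f x) := by
  obtain ⟨hzh, hzh_eq⟩ :=
    integral_mul_log_truncExpDensity_comp hg0 hgint hg1 hG hl hzint hz1 hC2
  obtain ⟨hfh, hfh_eq⟩ := integral_expG_mul_log_truncExpDensity_comp hg0 hgint hg1 hG hf
  have hzsplit :=
    mul_log_expG_ae_eq hl hf (hzac.mono fun x hx hgx => hx (by rw [hf, hgx, mul_zero]))
  have hfsplit :=
    mul_log_expG_ae_eq hl hf (w := f) (ae_of_all _ fun x hgx => by rw [hf, hgx, mul_zero])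
  have hzlogg : Integrable fun x => z x * log (g x) :=
    (integrable_add_iff_integrable_right' hzh).1 (hzlogf.congr hzsplit)
  rw [integral_congr_ae hzsplit, integral_add hzh hzlogg, hzh_eq, hC1]
  by_cases hflogg : Integrable fun x => f x * log (g x)
  · rw [integral_congr_ae hfsplit, integral_add hfh hflogg, hfh_eq]
  · have hflogf : ¬ Integrable fun x => f x * log (f x) := fun h =>
      hflogg ((integrable_add_iff_integrable_right' hfh).1 (h.congr hfsplit))
    rw [integral_undef hflogf, integral_undef hflogg, add_zero]
    exact integral_truncExpDensity_mul_log_nonneg hl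

end ExpG

/-- Maximum entropy characterization of the exp-G density. If `z` is any
probability density, absolutely continuous with respect to the exp-G density `f`, with
`z log z` and `z log f` integrable and satisfying constraints C1 and C2, then
`H_S(z) ≤ H_S(f)`, with equality iff `z = f` a.e. -/
theorem expG_maximum_entropy
    (g : ℝ → ℝ) (hg0 : ∀ x, 0 ≤ g x) (hgint : Integrable g)
    (hg1 : ∫ x, g x = 1)
    (G : ℝ → ℝ) (hG : ∀ x, G x = ∫ t in Iio x, g t)
    (l : ℝ) (hl : l ≠ 0)
    (f : ℝ → ℝ)
    (hf : ∀ x, f x = l / (1 - Real.exp (-l)) * g x * Real.exp (-(l * G x)))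
    (z : ℝ → ℝ) (hz0 : ∀ x, 0 ≤ z x) (hzint : Integrable z) (hz1 : ∫ x, z x = 1)
    (hzac : ∀ᵐ x, f x = 0 → z x = 0)
    (hzlogz : Integrable (fun x => z x * Real.log (z x)))
    (hzlogf : Integrable (fun x => z x * Real.log (f x)))
    (hC1 : ∫ x, z x * Real.log (g x) = ∫ x, f x * Real.log (g x))
    (hC2 : ∫ x, z x * G x = 1 / l - 1 / (Real.exp l - 1)) :
    -∫ x, z x * Real.log (z x) ≤ -∫ x, f x * Real.log (f x) ∧
    ((-∫ x, z x * Real.log (z x)) = -∫ x, f x * Real.log (f x) ↔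
      z =ᵐ[MeasureTheory.volume] f) := by
  have hf' : ∀ x, f x = truncExpDensity l (G x) * g x := fun x => by
    rw [hf, truncExpDensity]
    ring
  have hf0 : ∀ x, 0 ≤ f x := fun x => hf' x ▸ mul_nonneg (truncExpDensity_pos hl _).le (hg0 x)
  have hfint : Integrable f := funext hf' ▸ integrable_expG hg0 hgint hg1 hG
  have hf1 : ∫ x, f x = 1 := funext hf' ▸ integral_expG hg0 hgint hg1 hG hl
  exact shannonEntropy_le_and_eq_iff_of_integral_mul_log_le (ae_of_all _ hf0) (ae_of_all _ hz0)
    hfint hzint (hf1.trans hz1.symm) hzac hzlogz hzlogf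
    (integral_expG_mul_log_le hg0 hgint hg1 hG hl hf' hzint hz1 hzac hzlogf hC1 hC2)
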